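/- For every natural number N ≥ 1, the sum over n from 1 to N of q^n/(1-q^n) equals ∑_{n=1}^∞ n q^n (q^{n+1};q)_{N-1} − ∑_{n=1}^∞ n q^{n+N} (q^{n+1};q)_{N-1}, for |q|<1. (Guo–Zeng's finite analogue of Uchimura's identity.) -/

import Mathlib

open Finset

/-- q-Pochhammer symbol (a;q)_n = ∏_{k=0}^{n-1} (1 - a q^k). -/
noncomputable def qP (a q : ℂ) (n : ℕ) : ℂ := ∏ k ∈ Finset.range n, (1 - a * q ^ k)

/-- Gaussian (q-)binomial coefficient [N choose n]_q. -/
noncomputable def qBinom (q : ℂ) (N n : ℕ) : ℂ := qP q q N / (qP q q n * qP q q (N - n))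

/-! With `b k = (1 - (q ^ (k + 1); q)_N)`, the identity
`(a q; q)_(n+1) - (a; q)_(n+1) = a (1 - q ^ (n + 1)) (a q; q)_n` does double duty. For `a = q ^ k`
it makes `∑ₖ q ^ k (q ^ (k + 1); q)_n` telescope to `1 / (1 - q ^ (n + 1))`, and induction on `N`
then gives `∑ₖ b k = ∑_{n=1}^N q ^ n / (1 - q ^ n)`. For `a = q ^ (n + 1)` it shows that `1 - q ^ N`
times the `n`-th term of the first series on the right is `(n + 1) (b n - b (n + 1))`; as the right
side is `1 - q ^ N` times that series, summation by parts finishes the proof. -/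

open Filter Topology

section SummationByParts

variable {G : Type*} [AddCommGroup G]

theorem sum_range_succ_nsmul_sub (b : ℕ → G) (m : ℕ) :
    ∑ n ∈ range m, (n + 1) • (b n - b (n + 1)) = ∑ n ∈ range m, b n - m • b m := by
  induction m with
  | zero => simp
  | succ m ih =>
    rw [sum_range_succ, ih, sum_range_succ, succ_nsmul, succ_nsmul, nsmul_sub]
    abel

theorem tsum_succ_nsmul_sub_eq_tsum [TopologicalSpace G] [IsTopologicalAddGroup G] [T2Space G]
    {b : ℕ → G} (hb : Summable b) (hc : Summable fun n ↦ (n + 1) • (b n - b (n + 1)))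
    (hlim : Tendsto (fun n ↦ n • b n) atTop (𝓝 0)) :
    ∑' n, (n + 1) • (b n - b (n + 1)) = ∑' n, b n := by
  refine tendsto_nhds_unique hc.hasSum.tendsto_sum_nat ?_
  simpa [sum_range_succ_nsmul_sub] using hb.hasSum.tendsto_sum_nat.sub hlim

end SummationByParts

lemma qP_succ (a q : ℂ) (n : ℕ) : qP a q (n + 1) = qP a q n * (1 - a * q ^ n) :=
  prod_range_succ _ _

lemma qP_succ' (a q : ℂ) (n : ℕ) : qP a q (n + 1) = (1 - a) * qP (a * q) q n := by
  rw [qP, prod_range_succ', qP, pow_zero, mul_one, mul_comm]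
  congr 1
  exact prod_congr rfl fun k _ ↦ by ring

lemma qP_mul_sub_qP (a q : ℂ) (n : ℕ) :
    qP (a * q) q (n + 1) - qP a q (n + 1) = a * (1 - q ^ (n + 1)) * qP (a * q) q n := by
  rw [qP_succ, qP_succ']
  ring

lemma tendsto_qP_pow {q : ℂ} (hq : ‖q‖ < 1) (n : ℕ) :
    Tendsto (fun k ↦ qP (q ^ k) q n) atTop (𝓝 1) := by
  have hcont : Continuous fun a ↦ qP a q n := continuous_finsetProd _ fun _ _ ↦ by fun_prop
  simpa [qP, Function.comp_def] using
    (hcont.tendsto 0).comp (tendsto_pow_atTop_nhds_zero_of_norm_lt_one hq)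

lemma norm_qP_le {a q : ℂ} (ha : ‖a‖ ≤ 1) (hq : ‖q‖ ≤ 1) (n : ℕ) : ‖qP a q n‖ ≤ 2 ^ n := by
  have hfactor (k : ℕ) : ‖1 - a * q ^ k‖ ≤ 2 := by
    calc ‖1 - a * q ^ k‖ ≤ 1 + ‖a‖ * ‖q‖ ^ k := by simpa using norm_sub_le (1 : ℂ) (a * q ^ k)
      _ ≤ 1 + 1 := by gcongr; exact mul_le_one₀ ha (by positivity) (pow_le_one₀ (by positivity) hq)
      _ = 2 := by norm_num
  calc ‖qP a q n‖ = ∏ k ∈ range n, ‖1 - a * q ^ k‖ := norm_prod _ _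
    _ ≤ ∏ _k ∈ range n, (2 : ℝ) := prod_le_prod (fun _ _ ↦ norm_nonneg _) fun k _ ↦ hfactor k
    _ = 2 ^ n := by simp

lemma norm_one_sub_qP_le {a q : ℂ} (ha : ‖a‖ ≤ 1) (hq : ‖q‖ ≤ 1) (n : ℕ) :
    ‖1 - qP a q n‖ ≤ 2 ^ n * ‖a‖ := by
  induction n with
  | zero => simp [qP]
  | succ n ih =>
    have hstep : ‖qP a q n * (a * q ^ n)‖ ≤ 2 ^ n * ‖a‖ := by
      rw [norm_mul, norm_mul, norm_pow]
      calc ‖qP a q n‖ * (‖a‖ * ‖q‖ ^ n) ≤ 2 ^ n * (‖a‖ * 1) := by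
            gcongr
            · exact norm_qP_le ha hq n
            · exact pow_le_one₀ (norm_nonneg _) hq
        _ = 2 ^ n * ‖a‖ := by ring
    calc ‖1 - qP a q (n + 1)‖ = ‖(1 - qP a q n) + qP a q n * (a * q ^ n)‖ := by
          rw [qP_succ]; ring_nf
      _ ≤ 2 ^ n * ‖a‖ + 2 ^ n * ‖a‖ := (norm_add_le _ _).trans (add_le_add ih hstep)
      _ = 2 ^ (n + 1) * ‖a‖ := by ring

lemma summable_mul_qP {f : ℕ → ℂ} (hf : Summable fun k ↦ ‖f k‖) {a : ℕ → ℂ} (ha : ∀ k, ‖a k‖ ≤ 1)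
    {q : ℂ} (hq : ‖q‖ ≤ 1) (n : ℕ) : Summable fun k ↦ f k * qP (a k) q n :=
  .of_norm_bounded (hf.mul_right (2 ^ n)) fun k ↦ by
    rw [norm_mul]; gcongr; exact norm_qP_le (ha k) hq n

lemma norm_pow_le_one {q : ℂ} (hq : ‖q‖ < 1) (k : ℕ) : ‖q ^ k‖ ≤ 1 := by
  rw [norm_pow]; exact pow_le_one₀ (norm_nonneg _) hq.le

lemma one_sub_pow_succ_ne_zero {q : ℂ} (hq : ‖q‖ < 1) (n : ℕ) : 1 - q ^ (n + 1) ≠ 0 := by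
  refine sub_ne_zero.mpr fun h ↦ ?_
  have := pow_lt_one₀ (norm_nonneg q) hq n.succ_ne_zero
  rw [← norm_pow, ← h, norm_one] at this
  exact lt_irrefl _ this

lemma hasSum_pow_mul_qP {q : ℂ} (hq : ‖q‖ < 1) (n : ℕ) :
    HasSum (fun k ↦ q ^ k * qP (q ^ (k + 1)) q n) (1 - q ^ (n + 1))⁻¹ := by
  have hsum : Summable fun k ↦ q ^ k * qP (q ^ (k + 1)) q n :=
    summable_mul_qP (by simpa using summable_geometric_of_lt_one (norm_nonneg q) hq)
      (fun k ↦ norm_pow_le_one hq _) hq.le n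
  have hne : (1 : ℂ) - q ^ (n + 1) ≠ 0 := one_sub_pow_succ_ne_zero hq n
  -- `(q ^ k; q)_(n+1)` vanishes at `k = 0`, so the partial sums telescope to its value at `K`
  have hpartial (K : ℕ) : ∑ k ∈ range K, q ^ k * qP (q ^ (k + 1)) q n
      = qP (q ^ K) q (n + 1) * (1 - q ^ (n + 1))⁻¹ := by
    have hterm (k : ℕ) : q ^ k * qP (q ^ (k + 1)) q n
        = (qP (q ^ (k + 1)) q (n + 1) - qP (q ^ k) q (n + 1)) * (1 - q ^ (n + 1))⁻¹ := by
      rw [pow_succ, qP_mul_sub_qP]; field_simp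
    rw [sum_congr rfl fun k _ ↦ hterm k, ← sum_mul, sum_range_sub (fun k ↦ qP (q ^ k) q (n + 1))]
    simp [qP_succ']
  rw [hsum.hasSum_iff_tendsto_nat, funext hpartial]
  simpa using (tendsto_qP_pow hq (n + 1)).mul_const (1 - q ^ (n + 1))⁻¹

lemma hasSum_one_sub_qP {q : ℂ} (hq : ‖q‖ < 1) (N : ℕ) :
    HasSum (fun k ↦ 1 - qP (q ^ (k + 1)) q N) (∑ n ∈ Icc 1 N, q ^ n / (1 - q ^ n)) := by
  induction N with
  | zero => simp [qP]
  | succ N ih =>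
    have hterm (k : ℕ) : 1 - qP (q ^ (k + 1)) q (N + 1)
        = (1 - qP (q ^ (k + 1)) q N) + q ^ (N + 1) * (q ^ k * qP (q ^ (k + 1)) q N) := by
      rw [qP_succ]; ring
    rw [funext hterm, sum_Icc_succ_top (by omega), div_eq_mul_inv]
    exact ih.add ((hasSum_pow_mul_qP hq N).mul_left _)

lemma one_sub_pow_mul_tsum {q : ℂ} (hq : ‖q‖ < 1) (M : ℕ) :
    (1 - q ^ (M + 1)) * ∑' n : ℕ, ((n : ℂ) + 1) * q ^ (n + 1) * qP (q ^ (n + 2)) q M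
      = ∑' k : ℕ, (1 - qP (q ^ (k + 1)) q (M + 1)) := by
  set b : ℕ → ℂ := fun k ↦ 1 - qP (q ^ (k + 1)) q (M + 1)
  have hdiff (n : ℕ) : (n + 1) • (b n - b (n + 1))
      = (1 - q ^ (M + 1)) * (((n : ℂ) + 1) * q ^ (n + 1) * qP (q ^ (n + 2)) q M) := by
    have := qP_mul_sub_qP (q ^ (n + 1)) q M
    rw [← pow_succ] at this
    simp only [b, nsmul_eq_mul, Nat.cast_add, Nat.cast_one]
    linear_combination ((n : ℂ) + 1) * this
  have hsum : Summable fun n : ℕ ↦ ((n : ℂ) + 1) * q ^ (n + 1) * qP (q ^ (n + 2)) q M := by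
    refine summable_mul_qP ?_ (fun n ↦ norm_pow_le_one hq _) hq.le M
    have := (summable_nat_add_iff 1).mpr (hasSum_coe_mul_geometric_of_norm_lt_one hq).summable
    simpa using this.norm
  have hlim : Tendsto (fun n ↦ n • b n) atTop (𝓝 0) := by
    have hgeom := (tendsto_self_mul_const_pow_of_lt_one (norm_nonneg q) hq).const_mul
      (2 ^ (M + 1) * ‖q‖)
    rw [mul_zero] at hgeom
    refine squeeze_zero_norm (fun n ↦ ?_) hgeom
    calc ‖n • b n‖ = n * ‖b n‖ := by rw [nsmul_eq_mul, norm_mul, Complex.norm_natCast]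
      _ ≤ n * (2 ^ (M + 1) * ‖q ^ (n + 1)‖) := by
        gcongr; exact norm_one_sub_qP_le (norm_pow_le_one hq (n + 1)) hq.le (M + 1)
      _ = 2 ^ (M + 1) * ‖q‖ * (n * ‖q‖ ^ n) := by rw [norm_pow, pow_succ]; ring
  have hc : Summable fun n ↦ (n + 1) • (b n - b (n + 1)) :=
    (hsum.mul_left (1 - q ^ (M + 1))).congr fun n ↦ (hdiff n).symm
  calc (1 - q ^ (M + 1)) * ∑' n : ℕ, ((n : ℂ) + 1) * q ^ (n + 1) * qP (q ^ (n + 2)) q M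
      = ∑' n, (n + 1) • (b n - b (n + 1)) := by
        rw [← tsum_mul_left]; exact tsum_congr fun n ↦ (hdiff n).symm
    _ = ∑' n, b n := tsum_succ_nsmul_sub_eq_tsum (hasSum_one_sub_qP hq (M + 1)).summable hc hlim

/-- Guo–Zeng's finite analogue of Uchimura's identity. -/
theorem stmt_1 (N : ℕ) (hN : 1 ≤ N) (q : ℂ) (hq : ‖q‖ < 1) :
    ∑ n ∈ Finset.Icc 1 N, q ^ n / (1 - q ^ n) =
      (∑' n : ℕ, ((n : ℂ) + 1) * q ^ (n + 1) * qP (q ^ (n + 2)) q (N - 1)) -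
        ∑' n : ℕ, ((n : ℂ) + 1) * q ^ (n + 1 + N) * qP (q ^ (n + 2)) q (N - 1) := by
  obtain ⟨M, rfl⟩ : ∃ M, N = M + 1 := ⟨N - 1, by omega⟩
  have hshift (n : ℕ) : ((n : ℂ) + 1) * q ^ (n + 1 + (M + 1)) * qP (q ^ (n + 2)) q M
      = q ^ (M + 1) * (((n : ℂ) + 1) * q ^ (n + 1) * qP (q ^ (n + 2)) q M) := by
    ring
  rw [Nat.add_sub_cancel, tsum_congr hshift, tsum_mul_left, ← one_sub_mul, one_sub_pow_mul_tsum hq,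
    (hasSum_one_sub_qP hq (M + 1)).tsum_eq]
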